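/- arXiv:1802.10142 — 4 statements merged into one kernel-verified Lean document; each statement's English description precedes it below -/
import Mathlib

section
/- Let F be a forest and M a matrix over a field F with rows and columns indexed by V(F), zero diagonal, and M_{u,v} ≠ 0 iff {u,v} ∈ E(F). If two vertices v and w both belong to the null support of M (i.e., each has a nonzero coordinate in some null vector of M), then {v,w} is not an edge of F. -/
/-!
If a null vector `z` of `M` is nonzero at both ends of an edge `ab`, the `a`-th row of `M z = 0`
has the nonzero term `M a b * z b`, so `z` is nonzero at a further neighbour `c ≠ b` of `a`, and
`ca` is again such an edge. Iterating gives a non-backtracking walk, which in a forest is a path,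
so it cannot be continued forever. Hence every null vector vanishes at an endpoint of each edge.
For null vectors `x`, `y` with `x v ≠ 0`, `y w ≠ 0` at an edge `vw` this gives `x w = y v = 0`,
and then `x + y` is a null vector nonzero at both `v` and `w`.
-/

open SimpleGraph Matrix
open scoped Classical

/-- `M ∈ 𝓜_{𝔽,0}(G)`: zero diagonal, and off-diagonal entries are nonzero
exactly on the edges of `G`. -/
def MPattern0 {V : Type} {F : Type} [Field F] (G : SimpleGraph V)
    (M : Matrix V V F) : Prop :=
  (∀ v, M v v = 0) ∧ ∀ u v : V, u ≠ v → (M u v ≠ 0 ↔ G.Adj u v)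

/-- The null support of `M`: vertices with a nonzero coordinate in some null vector. -/
def nullSupp {V : Type} [Fintype V] {F : Type} [Field F] (M : Matrix V V F) : Set V :=
  {v | ∃ x : V → F, M.mulVec x = 0 ∧ x v ≠ 0}

theorem SimpleGraph.IsAcyclic.not_adj_of_forall_exists_adj_ne {V : Type*} [Finite V]
    {G : SimpleGraph V} (hG : G.IsAcyclic) {P : V → Prop}
    (hP : ∀ a b, G.Adj a b → P a → P b → ∃ c, G.Adj a c ∧ c ≠ b ∧ P c)
    {v w : V} (hv : P v) (hw : P w) : ¬ G.Adj v w := by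
  intro hvw
  have := Fintype.ofFinite V
  have long_path : ∀ n : ℕ, ∃ (a u : V) (p : G.Walk a u),
      p.IsPath ∧ n < p.length ∧ ∀ x ∈ p.support, P x := by
    intro n
    induction n with
    | zero => exact ⟨v, w, hvw.toWalk, by simp [hvw.ne], by simp, by simp [hv, hw]⟩
    | succ n ih =>
      obtain ⟨a, u, p, hp, hlen, hpP⟩ := ih
      have hnil : ¬ p.Nil := by rw [← Walk.length_eq_zero_iff]; omega
      obtain ⟨c, hac, hcb, hc⟩ :=
        hP a p.snd (p.adj_snd hnil) (hpP a p.start_mem_support) (hpP _ (p.getVert_mem_support 1))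
      have hcp : c ∉ p.support := fun h => hcb (hG.eq_snd_of_adj_start hp hac h)
      refine ⟨c, u, .cons hac.symm p, hp.cons hcp, by rw [Walk.length_cons]; omega, ?_⟩
      simpa [hc] using hpP
  obtain ⟨_, _, p, hp, hlen, -⟩ := long_path (Fintype.card V)
  exact hlen.not_gt hp.length_lt

namespace MPattern0

variable {V : Type} [Fintype V] {F : Type} [Field F] {G : SimpleGraph V} {M : Matrix V V F}

theorem exists_adj_ne_of_mulVec_apply_eq_zero (hM : MPattern0 G M) {x : V → F} {a b : V}
    (hx : (M *ᵥ x) a = 0) (hab : G.Adj a b) (hb : x b ≠ 0) :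
    ∃ c, G.Adj a c ∧ c ≠ b ∧ x c ≠ 0 := by
  by_contra! hvanish
  have hrow : (M *ᵥ x) a = M a b * x b := by
    refine Finset.sum_eq_single b (fun c _ hcb => ?_) (by simp)
    change M a c * x c = 0
    by_cases hca : c = a
    · rw [hca, hM.1, zero_mul]
    by_cases hac : G.Adj a c
    · rw [hvanish c hac hcb, mul_zero]
    · rw [not_ne_iff.mp (mt (hM.2 a c (Ne.symm hca)).mp hac), zero_mul]
  exact mul_ne_zero ((hM.2 a b hab.ne).mpr hab) hb (hrow ▸ hx)

theorem not_adj_of_mulVec_eq_zero (hM : MPattern0 G M) (hG : G.IsAcyclic) {x : V → F}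
    (hx : M *ᵥ x = 0) {v w : V} (hv : x v ≠ 0) (hw : x w ≠ 0) : ¬ G.Adj v w :=
  hG.not_adj_of_forall_exists_adj_ne
    (fun a _ hab _ hb => hM.exists_adj_ne_of_mulVec_apply_eq_zero (congrFun hx a) hab hb) hv hw

end MPattern0

theorem stmt0_general {V : Type} [Fintype V] {F : Type} [Field F]
    (G : SimpleGraph V) (hG : G.IsAcyclic) (M : Matrix V V F)
    (hM : MPattern0 G M) (v w : V)
    (hv : v ∈ nullSupp M) (hw : w ∈ nullSupp M) :
    ¬ G.Adj v w := by
  intro hvw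
  obtain ⟨x, hx, hxv⟩ := hv
  obtain ⟨y, hy, hyw⟩ := hw
  have hxw : x w = 0 := by
    by_contra hxw
    exact hM.not_adj_of_mulVec_eq_zero hG hx hxv hxw hvw
  have hyv : y v = 0 := by
    by_contra hyv
    exact hM.not_adj_of_mulVec_eq_zero hG hy hyv hyw hvw
  have hxy : M *ᵥ (x + y) = 0 := by rw [mulVec_add, hx, hy, add_zero]
  exact hM.not_adj_of_mulVec_eq_zero hG hxy (by simpa [hyv] using hxv) (by simpa [hxw] using hyw) hvw

theorem stmt0 {V : Type} [Fintype V] [DecidableEq V] {F : Type} [Field F]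
    (G : SimpleGraph V) (hG : G.IsAcyclic) (M : Matrix V V F)
    (hM : MPattern0 G M) (v w : V)
    (hv : v ∈ nullSupp M) (hw : w ∈ nullSupp M) :
    ¬ G.Adj v w :=
  stmt0_general G hG M hM v w hv hw
end

section
/- Let M be an acyclic matrix over a field F (i.e., M ∈ M_F(F') for some forest F'). Then there exist a finite-dimensional field extension E of F and an invertible diagonal matrix D over E such that D^{-1} M D is symmetric. -/
/-!
Conjugating by `D = diag(x)` turns the entry `M u v` into `M u v * x v / x u`, so `D⁻¹ M D` is
symmetric exactly when `M u v * x v ^ 2 = M v u * x u ^ 2`. A forest has no cycle along which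
the edge ratios `M v u / M u v` could fail to multiply to `1`, so they are the quotients
`c v / c u` of a potential `c : V → Fˣ`, obtained by multiplying the ratios along the unique
path from a root of each component. It remains to adjoin square roots of the finitely
many `c v`.
-/

open SimpleGraph Matrix
open scoped Classical

namespace SimpleGraph

variable {V α : Type*} [Group α] {G : SimpleGraph V}

lemma IsAcyclic.prod_map_darts_path_snd_eq (hG : G.IsAcyclic) (σ : G.Dart → α)
    (hσ : ∀ d, σ d.symm = (σ d)⁻¹) {r : V} (d : G.Dart) (p : G.Path r d.fst)
    (q : G.Path r d.snd) :
    ((q : G.Walk r d.snd).darts.map σ).prod = ((p : G.Walk r d.fst).darts.map σ).prod * σ d := by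
  by_cases h : d.fst ∈ (q : G.Walk r d.snd).support
  · rw [hG.path_concat p.2 q.2 d.adj h, Walk.darts_concat, List.map_concat, List.prod_concat]
  · have h' := hG.mem_support_of_ne_mem_support_of_adj_of_isPath p.2 q.2 d.adj h
    rw [hG.path_concat q.2 p.2 d.adj.symm h', Walk.darts_concat, List.map_concat,
      List.prod_concat]
    exact (mul_inv_cancel_right _ _).symm.trans (by rw [← hσ]; rfl)

theorem IsAcyclic.exists_potential (hG : G.IsAcyclic) (σ : G.Dart → α)
    (hσ : ∀ d, σ d.symm = (σ d)⁻¹) :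
    ∃ f : V → α, ∀ d : G.Dart, f d.snd = f d.fst * σ d := by
  let root : V → V := fun v => (G.connectedComponentMk v).out
  have reach : ∀ v, G.Reachable (root v) v := fun v =>
    ConnectedComponent.exact (G.connectedComponentMk v).out_eq
  let path : ∀ v, G.Path (root v) v := fun v => (reach v).some.toPath
  refine ⟨fun v => ((path v : G.Walk (root v) v).darts.map σ).prod, fun d => ?_⟩
  have hroot : root d.fst = root d.snd := by
    simp only [root, ConnectedComponent.sound d.adj.reachable]
  have := hG.prod_map_darts_path_snd_eq σ hσ d
    ⟨_, (Walk.isPath_copy _ hroot rfl).mpr (path d.fst).2⟩ (path d.snd)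
  simpa only [Walk.darts_copy] using this

end SimpleGraph

theorem exists_ne_zero_mul_eq_mul_of_isAcyclic {V F : Type*} [Field F] {G : SimpleGraph V}
    (hG : G.IsAcyclic) (M : Matrix V V F) (hM : ∀ u v, u ≠ v → (M u v ≠ 0 ↔ G.Adj u v)) :
    ∃ c : V → F, (∀ v, c v ≠ 0) ∧ ∀ u v, M u v * c v = M v u * c u := by
  have hne : ∀ d : G.Dart, M d.fst d.snd ≠ 0 := fun d => (hM _ _ d.adj.ne).2 d.adj
  let σ : G.Dart → Fˣ := fun d =>
    Units.mk0 (M d.snd d.fst / M d.fst d.snd) (div_ne_zero (hne d.symm) (hne d))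
  obtain ⟨f, hf⟩ := hG.exists_potential σ fun d => Units.ext (by simp [σ])
  refine ⟨fun v => f v, fun v => (f v).ne_zero, fun u v => ?_⟩
  rcases eq_or_ne u v with rfl | huv
  · rfl
  by_cases h : G.Adj u v
  · have hfuv := congrArg Units.val (hf ⟨(u, v), h⟩)
    simp only [Units.val_mul, Units.val_mk0, σ] at hfuv
    simp only [hfuv]
    field_simp [hne ⟨(u, v), h⟩]
  · have h₁ : M u v = 0 := not_not.mp (mt (hM u v huv).1 h)
    have h₂ : M v u = 0 := not_not.mp (mt (hM v u huv.symm).1 (mt G.adj_symm h))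
    simp [h₁, h₂]

theorem exists_finiteDimensional_forall_exists_pow_eq {ι F : Type} [Field F] [Finite ι]
    (a : ι → F) {n : ℕ} (hn : 0 < n) :
    ∃ (E : Type) (_ : Field E) (_ : Algebra F E) (_ : FiniteDimensional F E),
      ∀ i, ∃ x : E, x ^ n = algebraMap F E (a i) := by
  choose x hx using fun i =>
    IsAlgClosed.exists_pow_nat_eq (algebraMap F (AlgebraicClosure F) (a i)) hn
  let E := IntermediateField.adjoin F (Set.range x)
  have : FiniteDimensional F E := IntermediateField.finiteDimensional_adjoin fun y _ =>
    (Algebra.IsAlgebraic.isAlgebraic y).isIntegral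
  exact ⟨E, inferInstance, inferInstance, this, fun i =>
    ⟨⟨x i, IntermediateField.subset_adjoin _ _ ⟨i, rfl⟩⟩, Subtype.ext (hx i)⟩⟩

theorem Matrix.isSymm_diagonal_inv_mul_mul_diagonal {n K : Type*} [Fintype n] [DecidableEq n]
    [Field K] (A : Matrix n n K) (d : n → K) (hd : ∀ i, d i ≠ 0)
    (h : ∀ i j, A i j * d j ^ 2 = A j i * d i ^ 2) :
    ((diagonal d)⁻¹ * A * diagonal d).IsSymm := by
  have hinv : (diagonal d)⁻¹ = diagonal d⁻¹ :=
    inv_eq_left_inv <| by simp [diagonal_mul_diagonal, inv_mul_cancel₀ (hd _)]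
  ext i j
  have hi := hd i
  have hj := hd j
  simp only [hinv, transpose_apply, mul_diagonal, diagonal_mul, Pi.inv_apply]
  field_simp
  linear_combination -h i j

theorem stmt1 {V : Type} [Fintype V] [DecidableEq V] {F : Type} [Field F]
    (G : SimpleGraph V) (hG : G.IsAcyclic) (M : Matrix V V F)
    -- `M` is acyclic: its off-diagonal support pattern is the edge set of the
    -- forest `G` (diagonal entries are arbitrary).
    (hM : ∀ u v : V, u ≠ v → (M u v ≠ 0 ↔ G.Adj u v)) :
    ∃ (E : Type) (_ : Field E) (_ : Algebra F E) (_ : FiniteDimensional F E)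
      (D : Matrix V V E), D.IsDiag ∧ IsUnit D ∧
        (D⁻¹ * M.map (algebraMap F E) * D).IsSymm := by
  obtain ⟨c, hc0, hc⟩ := exists_ne_zero_mul_eq_mul_of_isAcyclic hG M hM
  obtain ⟨E, _, _, _, hsqrt⟩ := exists_finiteDimensional_forall_exists_pow_eq c two_pos
  choose x hx using hsqrt
  have hx0 : ∀ v, x v ≠ 0 := fun v h0 => hc0 v <| by simpa [h0] using (hx v).symm
  refine ⟨E, inferInstance, inferInstance, inferInstance, diagonal x, isDiag_diagonal x, ?_,
    isSymm_diagonal_inv_mul_mul_diagonal _ x hx0 fun u v => ?_⟩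
  · exact isUnit_diagonal.mpr (Pi.isUnit_iff.mpr fun v => (hx0 v).isUnit)
  · simp only [map_apply, hx, ← map_mul, hc]
end

section
/- Let F be a forest and M, N ∈ M_{F,0}(F). Then a vertex v belongs to Supp(M) if and only if v belongs to Supp(N). In particular, the null support of any matrix in M_{F,0}(F) equals the null support of the adjacency matrix A(F). -/
open SimpleGraph Matrix
open scoped Classical

/-!
Two matrices with the same off-diagonal pattern on a forest differ by diagonal scalings:
`M = D N D'` with `D`, `D'` invertible diagonal. Indeed, the ratios `M u v / N u v` over the
(directed) edges can be written as `a u * b v`, by peeling off leaves one at a time: a leaf `v`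
with neighbour `w` leaves both `a v` and `b v` free to match the two ratios on the edge `vw`.
Left multiplication by `D` does not change the kernel, and right multiplication by `D'`
rescales kernel vectors coordinatewise, so the null support is the same.
-/

namespace SimpleGraph

variable {V : Type} {G : SimpleGraph V}

theorem IsAcyclic.exists_adj_forall_adj_eq [Finite V] (hG : G.IsAcyclic) {x y : V}
    (hxy : G.Adj x y) : ∃ v w, G.Adj v w ∧ ∀ u, G.Adj v u → u = w := by
  have : Nonempty V := ⟨x⟩
  -- the start of a longest path is a leaf
  obtain ⟨u, v, p, hp, hmax⟩ := Walk.exists_isPath_forall_isPath_length_le_length G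
  have hnil : ¬p.Nil := by
    intro h
    have := hmax x y _ (Walk.IsPath.of_adj hxy)
    simp [h.length_eq_zero] at this
  refine ⟨u, p.snd, p.adj_snd hnil, fun w hw => hG.eq_snd_of_adj_start hp hw ?_⟩
  by_contra hw'
  have := hmax w v _ (hp.cons (h := hw.symm) hw')
  simp at this

theorem IsAcyclic.exists_forall_adj_mul_eq [Finite V] {α : Type*} [CommGroup α]
    (hG : G.IsAcyclic) (p : V → V → α) :
    ∃ a b : V → α, ∀ u v, G.Adj u v → a u * b v = p u v := by
  induction G using WellFoundedLT.induction with
  | _ G ih =>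
  by_cases hbot : G = ⊥
  · exact ⟨1, 1, fun u v huv => by simp [hbot] at huv⟩
  obtain ⟨x, y, hxy⟩ := (ne_bot_iff_exists_adj).mp hbot
  obtain ⟨v, w, hvw, hleaf⟩ := hG.exists_adj_forall_adj_eq hxy
  have hlt : G.deleteEdges {s(v, w)} < G :=
    (deleteEdges_le _).lt_of_ne (ne_of_apply_ne (·.Adj v w) (by simp [hvw]))
  obtain ⟨a, b, hab⟩ := ih _ hlt (hG.anti hlt.le)
  refine ⟨Function.update a v (p v w / b w), Function.update b v (p w v / a w), ?_⟩
  intro u u' huu'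
  by_cases hu : u = v
  · subst hu
    obtain rfl := hleaf u' huu'
    simp [Function.update_of_ne hvw.ne.symm]
  by_cases hu' : u' = v
  · subst hu'
    obtain rfl := hleaf u huu'.symm
    simp [Function.update_of_ne hvw.ne.symm]
  rw [Function.update_of_ne hu, Function.update_of_ne hu']
  exact hab u u' ((deleteEdges_adj ..).mpr ⟨huu', by simp [hu, hu']⟩)

end SimpleGraph

section NullSupport

variable {V : Type} [Fintype V] [DecidableEq V] {F : Type} [Field F]

theorem nullSupp_diagonal_mul {a : V → F} (ha : ∀ v, a v ≠ 0) (N : Matrix V V F) :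
    nullSupp (diagonal a * N) = nullSupp N := by
  have hker : ∀ y : V → F, diagonal a *ᵥ y = 0 ↔ y = 0 := fun y => by
    simp [funext_iff, mulVec_diagonal, ha]
  ext v
  simp only [nullSupp, Set.mem_ofPred_eq, ← mulVec_mulVec, hker]

theorem nullSupp_mul_diagonal {b : V → F} (hb : ∀ v, b v ≠ 0) (N : Matrix V V F) :
    nullSupp (N * diagonal b) = nullSupp N := by
  ext v
  constructor
  · rintro ⟨x, hx, hxv⟩
    refine ⟨diagonal b *ᵥ x, by rwa [mulVec_mulVec], ?_⟩
    simp [mulVec_diagonal, hb v, hxv]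
  · rintro ⟨y, hy, hyv⟩
    refine ⟨diagonal b⁻¹ *ᵥ y, ?_, by simp [mulVec_diagonal, hb v, hyv]⟩
    have hbb : diagonal b * diagonal b⁻¹ = 1 := by simp [diagonal_mul_diagonal, hb]
    rwa [mulVec_mulVec, Matrix.mul_assoc, hbb, Matrix.mul_one]

end NullSupport

section Pattern

variable {V : Type} {F : Type} [Field F] {G : SimpleGraph V} {M N : Matrix V V F}

theorem MPattern0.apply_ne_zero_iff (hM : MPattern0 G M) (u v : V) : M u v ≠ 0 ↔ G.Adj u v := by
  rcases eq_or_ne u v with rfl | huv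
  · simp [hM.1]
  · exact hM.2 u v huv

theorem mPattern0_adjMatrix [DecidableRel G.Adj] : MPattern0 G (G.adjMatrix F) :=
  ⟨fun v => by simp, fun u v _ => by by_cases h : G.Adj u v <;> simp [h]⟩

theorem MPattern0.exists_eq_diagonal_mul_mul_diagonal [Fintype V] [DecidableEq V]
    (hG : G.IsAcyclic) (hM : MPattern0 G M) (hN : MPattern0 G N) :
    ∃ a b : V → Fˣ, M = diagonal (fun v => (a v : F)) * N * diagonal (fun v => (b v : F)) := by
  obtain ⟨a, b, hab⟩ := hG.exists_forall_adj_mul_eq fun u v =>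
    if h : G.Adj u v then
      Units.mk0 (M u v / N u v)
        (div_ne_zero ((hM.apply_ne_zero_iff u v).mpr h) ((hN.apply_ne_zero_iff u v).mpr h))
    else 1
  refine ⟨a, b, Matrix.ext fun u v => ?_⟩
  rw [mul_diagonal, diagonal_mul]
  by_cases h : G.Adj u v
  · have := congrArg Units.val (hab u v h)
    simp only [h, dite_true, Units.val_mul, Units.val_mk0] at this
    rw [mul_right_comm, this, div_mul_cancel₀ _ ((hN.apply_ne_zero_iff u v).mpr h)]
  · rw [not_ne_iff.mp (mt (hM.apply_ne_zero_iff u v).mp h),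
      not_ne_iff.mp (mt (hN.apply_ne_zero_iff u v).mp h), mul_zero, zero_mul]

theorem MPattern0.nullSupp_eq [Fintype V] (hG : G.IsAcyclic) (hM : MPattern0 G M)
    (hN : MPattern0 G N) : nullSupp M = nullSupp N := by
  obtain ⟨a, b, rfl⟩ := hM.exists_eq_diagonal_mul_mul_diagonal hG hN
  rw [nullSupp_mul_diagonal (fun v => (b v).ne_zero),
    nullSupp_diagonal_mul (fun v => (a v).ne_zero)]

end Pattern

theorem stmt8_general {V : Type} [Fintype V] {F : Type} [Field F]
    (G : SimpleGraph V) (hG : G.IsAcyclic) (M N : Matrix V V F)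
    (hM : MPattern0 G M) (hN : MPattern0 G N) :
    (∀ v : V, v ∈ nullSupp M ↔ v ∈ nullSupp N) ∧
      nullSupp M = nullSupp (G.adjMatrix F) :=
  ⟨fun v => by rw [hM.nullSupp_eq hG hN], hM.nullSupp_eq hG mPattern0_adjMatrix⟩

theorem stmt8 {V : Type} [Fintype V] [DecidableEq V] {F : Type} [Field F]
    (G : SimpleGraph V) (hG : G.IsAcyclic) (M N : Matrix V V F)
    (hM : MPattern0 G M) (hN : MPattern0 G N) :
    (∀ v : V, v ∈ nullSupp M ↔ v ∈ nullSupp N) ∧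
      nullSupp M = nullSupp (G.adjMatrix F) :=
  stmt8_general G hG M N hM hN
end

section
/- Let F be a forest, M ∈ M_{F,0}(F), and let S = Supp(M). Let 𝓕_S(F) be the subgraph of F induced by S ∪ N(S). Then a vector x is in the null space of M if and only if the restriction of x to 𝓕_S(F) lies in the null space of M[𝓕_S(F)] and x vanishes on all vertices outside 𝓕_S(F). -/
open SimpleGraph Matrix
open scoped Classical

/-!
Rescaling the rows of `M` by nonzero weights `f` (products of entry ratios `M a b / M b a` along
the path from a root of each tree) makes it symmetric, so `(f * z) ⬝ᵥ M x = (f * x) ⬝ᵥ M z`.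
Let `t ∉ S` be adjacent to `s ∈ S`, and let `y` be a null vector with `y s ≠ 0`, so `y t = 0`.
Keeping `y` only on the side of `s` of the bridge `st` gives `z` with `M z = (M t s * y s) • e t`,
and `z` is supported in `S`. Hence if `x` vanishes off `S ∪ N(S)` and `M x` vanishes on `S`,
pairing `z` with `x` gives `x t = 0`: `x` is supported on `S`, and then `M x` also vanishes
outside `S ∪ N(S)`.
-/

namespace SimpleGraph

variable {V F : Type} [Field F] {G : SimpleGraph V}

def Walk.entryRatio (M : Matrix V V F) {u v : V} (p : G.Walk u v) : F :=
  (p.darts.map fun d => M d.fst d.snd / M d.snd d.fst).prod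

lemma Walk.entryRatio_concat (M : Matrix V V F) {u v w : V} (p : G.Walk u v) (h : G.Adj v w) :
    (p.concat h).entryRatio M = p.entryRatio M * (M v w / M w v) := by
  simp [Walk.entryRatio, Walk.darts_concat]

lemma Walk.entryRatio_ne_zero {M : Matrix V V F} (hM : ∀ u v, G.Adj u v → M u v ≠ 0)
    {u v : V} (p : G.Walk u v) : p.entryRatio M ≠ 0 := by
  refine List.prod_ne_zero fun h => ?_
  obtain ⟨d, -, hd⟩ := List.mem_map.mp h
  exact div_ne_zero (hM _ _ d.adj) (hM _ _ d.adj.symm) hd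

lemma IsAcyclic.entryRatio_mul_eq (hG : G.IsAcyclic) {M : Matrix V V F}
    (hM : ∀ u v, G.Adj u v → M u v ≠ 0) {r u v : V} {p : G.Walk r u} {q : G.Walk r v}
    (hp : p.IsPath) (hq : q.IsPath) (huv : G.Adj u v) :
    p.entryRatio M * M u v = q.entryRatio M * M v u := by
  by_cases hu : u ∈ q.support
  · rw [hG.path_concat hp hq huv hu, Walk.entryRatio_concat, mul_assoc,
      div_mul_cancel₀ _ (hM v u huv.symm)]
  · rw [hG.path_concat hq hp huv.symm
      (hG.mem_support_of_ne_mem_support_of_adj_of_isPath hp hq huv hu),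
      Walk.entryRatio_concat, mul_assoc, div_mul_cancel₀ _ (hM u v huv)]

theorem IsAcyclic.exists_symmetrizer (hG : G.IsAcyclic) {M : Matrix V V F}
    (hM : ∀ u v, G.Adj u v → M u v ≠ 0) :
    ∃ f : V → F, (∀ v, f v ≠ 0) ∧ ∀ u v, G.Adj u v → f u * M u v = f v * M v u := by
  have hroot (v : V) : G.Reachable (G.connectedComponentMk v).out v :=
    ConnectedComponent.exact (Quot.out_eq _)
  choose P hP using fun v => (hroot v).exists_isPath
  refine ⟨fun v => (P v).entryRatio M, fun v => Walk.entryRatio_ne_zero hM _, fun u v huv => ?_⟩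
  have hr : (G.connectedComponentMk u).out = (G.connectedComponentMk v).out := by
    rw [ConnectedComponent.sound huv.reachable]
  have := hG.entryRatio_mul_eq hM (p := (P u).copy hr rfl) (q := P v)
    ((Walk.isPath_copy _ _ _).mpr (hP u)) (hP v) huv
  simpa [Walk.entryRatio, Walk.darts_copy] using this

def bridgeSide (G : SimpleGraph V) (s t : V) : Set V :=
  {a | (G.deleteEdges {s(s, t)}).Reachable s a}

lemma start_mem_bridgeSide (s t : V) : s ∈ G.bridgeSide s t := Reachable.refl s

lemma IsAcyclic.notMem_bridgeSide (hG : G.IsAcyclic) {s t : V} (hst : G.Adj s t) :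
    t ∉ G.bridgeSide s t :=
  isBridge_iff.mp (isAcyclic_iff_forall_adj_isBridge.mp hG hst)

lemma IsAcyclic.eq_of_adj_of_mem_bridgeSide (hG : G.IsAcyclic) {s t a u : V} (hst : G.Adj s t)
    (ha : a ∈ G.bridgeSide s t) (hu : u ∉ G.bridgeSide s t) (hau : G.Adj a u) :
    a = s ∧ u = t := by
  have hedge : s(a, u) = s(s, t) := by
    by_contra hne
    exact hu (Reachable.trans ha (Adj.reachable ((deleteEdges_adj ..).mpr ⟨hau, hne⟩)))
  rcases Sym2.eq_iff.mp hedge with h | ⟨rfl, rfl⟩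
  · exact h
  · exact absurd ha (hG.notMem_bridgeSide hst)

end SimpleGraph

open SimpleGraph

section

variable {V F : Type} [Field F] {G : SimpleGraph V} {M : Matrix V V F}

lemma MPattern0.apply_ne_zero (hM : MPattern0 G M) {u v : V} (huv : G.Adj u v) : M u v ≠ 0 :=
  (hM.2 u v huv.ne).mpr huv

lemma MPattern0.apply_eq_zero (hM : MPattern0 G M) {u v : V} (huv : ¬ G.Adj u v) : M u v = 0 := by
  rcases eq_or_ne u v with rfl | hne
  · exact hM.1 u
  · exact not_not.mp (mt (hM.2 u v hne).mp huv)

lemma MPattern0.exists_symmetrizer (hM : MPattern0 G M) (hG : G.IsAcyclic) :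
    ∃ f : V → F, (∀ v, f v ≠ 0) ∧ ∀ u v, f u * M u v = f v * M v u := by
  obtain ⟨f, hf0, hf⟩ := hG.exists_symmetrizer fun u v => hM.apply_ne_zero
  refine ⟨f, hf0, fun u v => ?_⟩
  by_cases huv : G.Adj u v
  · exact hf u v huv
  · rw [hM.apply_eq_zero huv, hM.apply_eq_zero (mt G.adj_symm huv), mul_zero, mul_zero]

end

section

variable {V R : Type} [Fintype V] [CommSemiring R]

lemma vecMul_mul_eq_mul_mulVec {M : Matrix V V R} {f : V → R}
    (hf : ∀ u v, f u * M u v = f v * M v u) (z : V → R) : (f * z) ᵥ* M = f * (M *ᵥ z) := by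
  ext u
  simp only [vecMul, mulVec, dotProduct, Pi.mul_apply, Finset.mul_sum]
  refine Finset.sum_congr rfl fun a _ => ?_
  rw [mul_right_comm, hf, mul_assoc]

lemma submatrix_mulVec_subtype_apply (M : Matrix V V R) {s : Set V} [Fintype s] {x : V → R}
    (hx : ∀ v ∉ s, x v = 0) (w : s) :
    (M.submatrix (↑) (↑) *ᵥ fun u : s => x u) w = (M *ᵥ x) w := by
  simp only [mulVec, dotProduct, submatrix_apply]
  rw [Finset.sum_set_coe (f := fun u => M w u * x u)]
  exact Finset.sum_subset (Finset.subset_univ _) fun u _ hu => by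
    rw [hx u (by simpa using hu), mul_zero]

end

section

variable {V F : Type} [Fintype V] [Field F] {G : SimpleGraph V} {M : Matrix V V F}

lemma apply_eq_zero_of_notMem_nullSupp {x : V → F} (hx : M *ᵥ x = 0) {v : V}
    (hv : v ∉ nullSupp M) : x v = 0 :=
  not_not.mp fun h => hv ⟨x, hx, h⟩

lemma MPattern0.mulVec_apply_eq_zero (hM : MPattern0 G M) {s : Set V} {x : V → F}
    (hx : ∀ u ∉ s, x u = 0) {v : V} (hv : ∀ u ∈ s, ¬ G.Adj v u) : (M *ᵥ x) v = 0 :=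
  Finset.sum_eq_zero fun u _ => show M v u * x u = 0 by
    by_cases hu : u ∈ s
    · rw [hM.apply_eq_zero (hv u hu), zero_mul]
    · rw [hx u hu, mul_zero]

lemma MPattern0.mulVec_indicator_bridgeSide [DecidableEq V] (hM : MPattern0 G M)
    (hG : G.IsAcyclic) {s t : V} (hst : G.Adj s t) {y : V → F} (hy : M *ᵥ y = 0)
    (hyt : y t = 0) :
    M *ᵥ (G.bridgeSide s t).indicator y = Pi.single t (M t s * y s) := by
  ext u
  by_cases hu : u ∈ G.bridgeSide s t
  · have hut : u ≠ t := fun h => hG.notMem_bridgeSide hst (h ▸ hu)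
    rw [Pi.single_eq_of_ne hut, ← Pi.zero_apply (M := fun _ => F) u, ← hy]
    refine Finset.sum_congr rfl fun a _ => show M u a * _ = M u a * y a from ?_
    by_cases ha : a ∈ G.bridgeSide s t
    · rw [Set.indicator_of_mem ha]
    · rw [Set.indicator_of_notMem ha]
      by_cases hua : G.Adj u a
      · rw [(hG.eq_of_adj_of_mem_bridgeSide hst hu ha hua).2, hyt]
      · rw [hM.apply_eq_zero hua, zero_mul, zero_mul]
  · have hside (a : V) (ha : a ∈ G.bridgeSide s t) (hua : G.Adj u a) : a = s ∧ u = t :=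
      hG.eq_of_adj_of_mem_bridgeSide hst ha hu hua.symm
    have hs := start_mem_bridgeSide (G := G) s t
    rw [mulVec, dotProduct, Finset.sum_eq_single s, Set.indicator_of_mem hs]
    · rcases eq_or_ne u t with rfl | hut
      · rw [Pi.single_eq_same]
      · rw [Pi.single_eq_of_ne hut, hM.apply_eq_zero fun hus => hut (hside s hs hus).2, zero_mul]
    · intro a _ has
      by_cases ha : a ∈ G.bridgeSide s t
      · rw [hM.apply_eq_zero fun hua => has (hside a ha hua).1, zero_mul]
      · rw [Set.indicator_of_notMem ha, mul_zero]
    · exact fun h => (h (Finset.mem_univ s)).elim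

theorem MPattern0.apply_eq_zero_of_adj_mem_nullSupp (hM : MPattern0 G M) (hG : G.IsAcyclic)
    {s t : V} (hs : s ∈ nullSupp M) (ht : t ∉ nullSupp M) (hst : G.Adj s t) {x : V → F}
    (hx : ∀ a ∈ nullSupp M, (M *ᵥ x) a = 0) : x t = 0 := by
  classical
  obtain ⟨y, hy, hys⟩ := hs
  obtain ⟨f, hf0, hf⟩ := hM.exists_symmetrizer hG
  set z := (G.bridgeSide s t).indicator y
  have hz : (f * z) ⬝ᵥ (M *ᵥ x) = 0 := Finset.sum_eq_zero fun a _ => by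
    by_cases hya : y a = 0
    · simp [z, hya]
    · rw [hx a ⟨y, hy, hya⟩, mul_zero]
  rw [dotProduct_mulVec, vecMul_mul_eq_mul_mulVec hf,
    hM.mulVec_indicator_bridgeSide hG hst hy (apply_eq_zero_of_notMem_nullSupp hy ht)] at hz
  simpa [dotProduct, Pi.single_apply, hf0 t, hM.apply_ne_zero hst.symm, hys] using hz

end

theorem stmt9 {V : Type} [Fintype V] [DecidableEq V] {F : Type} [Field F]
    (G : SimpleGraph V) (hG : G.IsAcyclic) (M : Matrix V V F)
    (hM : MPattern0 G M) (x : V → F) :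
    -- W is the vertex set of the S-set 𝓕_S(F): the null support together with
    -- its neighborhood
    M.mulVec x = 0 ↔
      ((M.submatrix
          (fun w : ↥(nullSupp M ∪ {u : V | ∃ s ∈ nullSupp M, G.Adj u s}) => (w : V))
          (fun w : ↥(nullSupp M ∪ {u : V | ∃ s ∈ nullSupp M, G.Adj u s}) => (w : V))).mulVec
          (fun w => x (w : V)) = 0 ∧
        ∀ v : V, v ∉ nullSupp M ∪ {u : V | ∃ s ∈ nullSupp M, G.Adj u s} → x v = 0) := by
  set S := nullSupp M
  set W := S ∪ {u : V | ∃ s ∈ S, G.Adj u s}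
  constructor
  · intro hx
    have hxW : ∀ v ∉ W, x v = 0 := fun v hv =>
      apply_eq_zero_of_notMem_nullSupp hx fun h => hv (Or.inl h)
    refine ⟨funext fun w => ?_, hxW⟩
    rw [submatrix_mulVec_subtype_apply M hxW, hx]
    rfl
  · rintro ⟨hxW, hoff⟩
    have hrow : ∀ w ∈ W, (M *ᵥ x) w = 0 := fun w hw => by
      rw [← submatrix_mulVec_subtype_apply M hoff ⟨w, hw⟩, hxW, Pi.zero_apply]
    have hS : ∀ v ∉ S, x v = 0 := fun v hv => by
      by_cases hvW : v ∈ W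
      · obtain ⟨s, hs, hvs⟩ := hvW.resolve_left hv
        exact hM.apply_eq_zero_of_adj_mem_nullSupp hG hs hv hvs.symm
          fun a ha => hrow a (Or.inl ha)
      · exact hoff v hvW
    funext v
    by_cases hvW : v ∈ W
    · exact hrow v hvW
    · exact hM.mulVec_apply_eq_zero hS fun u hu hvu => hvW (Or.inr ⟨u, hu, hvu⟩)
end
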